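/- arXiv:2003.14335 — 3 statements merged into one kernel-verified Lean document; each statement's English description precedes it below -/
import Mathlib

section
/- Let k > 0, let L be a real number with 0 < L ≤ π/(2k), and let y ∈ (0, L). Set α_y = − sin(k y)/sin(k (y − L)) and define ψ_y : [0, L] → ℝ by ψ_y(t) = cos(k t) + α_y·cos(k (t − L)). Then y is the unique zero of the derivative ψ_y' in (0, L), and ψ_y attains its strict global maximum over [0, L] at y; that is, ψ_y(x) < ψ_y(y) for every x ∈ [0, L] with x ≠ y. -/
/-!
The constraint `sin (k y) + α_y sin (k (y - L)) = 0` says that `ψ_y'` vanishes at `y`, and a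
combination of the two shifted cosines with that property is the single cosine
`ψ_y(y) · cos (k (t - y))`. Since `k L ≤ π / 2`, both cosines are positive on `[0, L]` and
`α_y > 0`, so `ψ_y(y) > 0`; on `[0, L]` the phase `k (t - y)` stays in `(-π / 2, π / 2)`, where
`cos` has its only critical point and strict maximum at `0`.
-/

open Real

theorem cos_add_mul_cos_sub_eq_mul_cos (k y c α t : ℝ)
    (h : sin (k * y) + α * sin (k * (y - c)) = 0) :
    cos (k * t) + α * cos (k * (t - c)) =
      (cos (k * y) + α * cos (k * (y - c))) * cos (k * (t - y)) := by
  have hy : k * t = k * (t - y) + k * y := by ring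
  have hc : k * (t - c) = k * (t - y) + k * (y - c) := by ring
  rw [hy, hc, cos_add, cos_add]
  linear_combination (-sin (k * (t - y))) * h

theorem deriv_const_mul_cos_mul_sub (C k y x : ℝ) :
    deriv (fun t => C * cos (k * (t - y))) x = -(C * k) * sin (k * (x - y)) := by
  have h := (((hasDerivAt_id x).sub_const y).const_mul k).cos.const_mul C
  simp only [id, mul_one] at h
  rw [h.deriv]
  ring

theorem const_mul_cos_mul_sub_lt {C k x y : ℝ} (hC : 0 < C) (hk : k ≠ 0) (hxy : x ≠ y)
    (h : |k * (x - y)| < 2 * π) : C * cos (k * (x - y)) < C := by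
  rw [abs_lt] at h
  have hne : cos (k * (x - y)) ≠ 1 := by
    rw [Ne, cos_eq_one_iff_of_lt_of_lt h.1 h.2]
    exact mul_ne_zero hk (sub_ne_zero.mpr hxy)
  nlinarith [lt_of_le_of_ne (cos_le_one (k * (x - y))) hne]

theorem cos_add_mul_cos_sub_pos {k y c α : ℝ} (hα : 0 ≤ α) (hy : |k * y| < π / 2)
    (hyc : |k * (y - c)| < π / 2) : 0 < cos (k * y) + α * cos (k * (y - c)) := by
  have h₁ := cos_pos_of_mem_Ioo (abs_lt.mp hy)
  have h₂ := cos_pos_of_mem_Ioo (abs_lt.mp hyc)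
  positivity

theorem stmt1_general (k L y : ℝ) (hk : 0 < k) (hLk : L ≤ π / (2 * k))
    (hy : y ∈ Set.Ioo 0 L) (αy : ℝ) (ψ : ℝ → ℝ)
    (hα : αy = - Real.sin (k * y) / Real.sin (k * (y - L)))
    (hψ : ∀ t : ℝ, ψ t = Real.cos (k * t) + αy * Real.cos (k * (t - L))) :
    (∀ x ∈ Set.Ioo 0 L, (deriv ψ x = 0 ↔ x = y)) ∧
    (∀ x ∈ Set.Icc 0 L, x ≠ y → ψ x < ψ y) := by
  obtain ⟨hy0, hyL⟩ := hy
  have hkL : k * L ≤ π / 2 := by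
    rw [le_div_iff₀ (by positivity)] at hLk
    linarith
  have hphase : ∀ x ∈ Set.Icc 0 L, |k * (x - y)| < π / 2 := fun x ⟨hx0, hxL⟩ => by
    rw [abs_lt]; constructor <;> nlinarith
  have hsin_y : 0 < sin (k * y) := sin_pos_of_pos_of_lt_pi (by positivity) (by nlinarith)
  have hsin_yL : sin (k * (y - L)) < 0 := sin_neg_of_neg_of_neg_pi_lt (by nlinarith) (by nlinarith)
  have hα_pos : 0 < αy := by
    rw [hα]; exact div_pos_of_neg_of_neg (neg_neg_of_pos hsin_y) hsin_yL
  have hcrit : sin (k * y) + αy * sin (k * (y - L)) = 0 := by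
    rw [hα]; field_simp [hsin_yL.ne]; ring
  have hψy_pos : 0 < ψ y := by
    rw [hψ]
    exact cos_add_mul_cos_sub_pos hα_pos.le (by rw [abs_lt]; constructor <;> nlinarith)
      (by rw [abs_lt]; constructor <;> nlinarith)
  have hψ_eq : ∀ t, ψ t = ψ y * cos (k * (t - y)) := fun t => by
    rw [hψ, hψ y]; exact cos_add_mul_cos_sub_eq_mul_cos k y L αy t hcrit
  refine ⟨fun x ⟨hx0, hxL⟩ => ?_, fun x hx hxy => ?_⟩
  · have h := abs_lt.mp (hphase x ⟨hx0.le, hxL.le⟩)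
    rw [funext hψ_eq, deriv_const_mul_cos_mul_sub, mul_eq_zero,
      sin_eq_zero_iff_of_lt_of_lt (by linarith [pi_pos]) (by linarith [pi_pos])]
    simp [hψy_pos.ne', hk.ne', sub_eq_zero]
  · rw [hψ_eq x]
    exact const_mul_cos_mul_sub_lt hψy_pos hk.ne' hxy (by linarith [hphase x hx, pi_pos])

/-- with `α_y = - sin (k y) / sin (k (y - L))` and
`ψ_y(t) = cos (k t) + α_y cos (k (t - L))`, the point `y` is the unique zero of `ψ_y'`
in `(0, L)`, and `ψ_y` attains its strict global maximum over `[0, L]` at `y`. -/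
theorem stmt1 (k L y : ℝ) (hk : 0 < k) (hL : 0 < L) (hLk : L ≤ π / (2 * k))
    (hy : y ∈ Set.Ioo 0 L) (αy : ℝ) (ψ : ℝ → ℝ)
    (hα : αy = - Real.sin (k * y) / Real.sin (k * (y - L)))
    (hψ : ∀ t : ℝ, ψ t = Real.cos (k * t) + αy * Real.cos (k * (t - L))) :
    (∀ x ∈ Set.Ioo 0 L, (deriv ψ x = 0 ↔ x = y)) ∧
    (∀ x ∈ Set.Icc 0 L, x ≠ y → ψ x < ψ y) :=
  stmt1_general k L y hk hLk hy αy ψ hα hψ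
end

section
/- Let k > 0, let L be a real number with 0 < L ≤ π/(2k), and let y ∈ (0, L). Set α_y = − sin(k y)/sin(k (y − L)) and define ψ_y : [0, L] → ℝ by ψ_y(t) = cos(k t) + α_y·cos(k (t − L)). Then ψ_y(t) > 0 for every t ∈ (0, L); consequently ψ_y''(t) = −k²·ψ_y(t) < 0 for every t ∈ (0, L), i.e. ψ_y is strictly concave on (0, L). -/
/-!
For `0 < y < L ≤ π / (2k)` both `sin (k y)` and `sin (k (L - y))` are positive, so `α_y > 0`;
for `t ∈ (0, L)` the arguments `k t` and `k (t - L)` lie in `(-π/2, π/2)`, so both cosines are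
positive and hence `ψ_y t > 0`. Each summand of `ψ_y` solves `f'' = -k² f`, so
`ψ_y'' = -k² ψ_y < 0` on `(0, L)`, which gives strict concavity.
-/

open Real Set

theorem hasDerivAt_cos_mul_sub (k s t : ℝ) :
    HasDerivAt (fun t => cos (k * (t - s))) (-(k * sin (k * (t - s)))) t := by
  simpa [mul_comm] using (((hasDerivAt_id t).sub_const s).const_mul k).cos

theorem hasDerivAt_sin_mul_sub (k s t : ℝ) :
    HasDerivAt (fun t => sin (k * (t - s))) (k * cos (k * (t - s))) t := by
  simpa [mul_comm] using (((hasDerivAt_id t).sub_const s).const_mul k).sin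

theorem deriv_deriv_cos_add_mul_cos_sub (k L a : ℝ) :
    deriv (deriv fun t => cos (k * t) + a * cos (k * (t - L))) =
      fun t => -(k ^ 2) * (cos (k * t) + a * cos (k * (t - L))) := by
  have hfirst : deriv (fun t => cos (k * t) + a * cos (k * (t - L))) =
      fun t => -k * (sin (k * t) + a * sin (k * (t - L))) := by
    ext t
    have h := (hasDerivAt_cos_mul_sub k 0 t).fun_add ((hasDerivAt_cos_mul_sub k L t).const_mul a)
    simp only [sub_zero] at h
    rw [h.deriv]
    ring
  ext t
  have h := ((hasDerivAt_sin_mul_sub k 0 t).fun_add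
    ((hasDerivAt_sin_mul_sub k L t).const_mul a)).const_mul (-k)
  simp only [sub_zero] at h
  rw [hfirst, h.deriv]
  ring

theorem cos_mul_pos_of_abs_lt {k L t : ℝ} (hk : 0 < k) (hkL : k * L ≤ π / 2) (ht : |t| < L) :
    0 < cos (k * t) := by
  apply cos_pos_of_mem_Ioo
  rw [mem_Ioo, ← abs_lt, abs_mul, abs_of_pos hk]
  calc k * |t| < k * L := by gcongr
    _ ≤ π / 2 := hkL

theorem sin_mul_pos_of_mem_Ioo {k L t : ℝ} (hk : 0 < k) (hkL : k * L ≤ π) (ht : t ∈ Ioo 0 L) :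
    0 < sin (k * t) := by
  apply sin_pos_of_pos_of_lt_pi (mul_pos hk ht.1)
  calc k * t < k * L := by gcongr; exact ht.2
    _ ≤ π := hkL

theorem neg_sin_div_sin_mul_sub_pos {k L y : ℝ} (hk : 0 < k) (hkL : k * L ≤ π)
    (hy : y ∈ Ioo 0 L) : 0 < -sin (k * y) / sin (k * (y - L)) := by
  have hreflect : sin (k * (y - L)) = -sin (k * (L - y)) := by
    rw [← sin_neg]; ring_nf
  have hLy : L - y ∈ Ioo 0 L := ⟨by linarith [hy.2], by linarith [hy.1]⟩
  rw [hreflect, neg_div_neg_eq]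
  exact div_pos (sin_mul_pos_of_mem_Ioo hk hkL hy) (sin_mul_pos_of_mem_Ioo hk hkL hLy)

theorem stmt2_general (k L y : ℝ) (hk : 0 < k) (hLk : L ≤ π / (2 * k))
    (hy : y ∈ Set.Ioo 0 L) (αy : ℝ) (ψ : ℝ → ℝ)
    (hα : αy = - Real.sin (k * y) / Real.sin (k * (y - L)))
    (hψ : ∀ t : ℝ, ψ t = Real.cos (k * t) + αy * Real.cos (k * (t - L))) :
    (∀ t ∈ Set.Ioo 0 L,
      0 < ψ t ∧ deriv (deriv ψ) t = -(k ^ 2) * ψ t ∧ deriv (deriv ψ) t < 0) ∧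
    StrictConcaveOn ℝ (Set.Ioo 0 L) ψ := by
  have hkL : k * L ≤ π / 2 := by
    rw [le_div_iff₀ (by positivity)] at hLk
    linarith
  have hα_pos : 0 < αy := hα ▸ neg_sin_div_sin_mul_sub_pos hk (by linarith [pi_pos]) hy
  have hψ_pos : ∀ t ∈ Ioo 0 L, 0 < ψ t := fun t ⟨ht0, htL⟩ => by
    have hc₀ := cos_mul_pos_of_abs_lt (t := t) hk hkL (by rwa [abs_of_pos ht0])
    have hc₁ := cos_mul_pos_of_abs_lt (t := t - L) hk hkL
      (by rw [abs_of_neg (sub_neg.2 htL)]; linarith)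
    rw [hψ t]
    positivity
  have hψ_eq : ψ = fun t => cos (k * t) + αy * cos (k * (t - L)) := funext hψ
  have hψ'' : ∀ t, deriv (deriv ψ) t = -(k ^ 2) * ψ t := by
    simp only [hψ_eq, deriv_deriv_cos_add_mul_cos_sub, implies_true]
  have hψ''_neg : ∀ t ∈ Ioo 0 L, deriv (deriv ψ) t < 0 := fun t ht => by
    rw [hψ'']
    exact mul_neg_of_neg_of_pos (neg_neg_of_pos (pow_pos hk 2)) (hψ_pos t ht)
  refine ⟨fun t ht => ⟨hψ_pos t ht, hψ'' t, hψ''_neg t ht⟩, ?_⟩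
  refine strictConcaveOn_of_deriv2_neg (convex_Ioo 0 L) ?_ ?_
  · rw [hψ_eq]; fun_prop
  · rw [interior_Ioo]
    exact hψ''_neg

/-- with `α_y = - sin (k y) / sin (k (y - L))` and
`ψ_y(t) = cos (k t) + α_y cos (k (t - L))`, one has `ψ_y > 0` on `(0, L)`; consequently
`ψ_y'' = -k² ψ_y < 0` on `(0, L)`, i.e. `ψ_y` is strictly concave on `(0, L)`. -/
theorem stmt2 (k L y : ℝ) (hk : 0 < k) (hL : 0 < L) (hLk : L ≤ π / (2 * k))
    (hy : y ∈ Set.Ioo 0 L) (αy : ℝ) (ψ : ℝ → ℝ)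
    (hα : αy = - Real.sin (k * y) / Real.sin (k * (y - L)))
    (hψ : ∀ t : ℝ, ψ t = Real.cos (k * t) + αy * Real.cos (k * (t - L))) :
    (∀ t ∈ Set.Ioo 0 L,
      0 < ψ t ∧ deriv (deriv ψ) t = -(k ^ 2) * ψ t ∧ deriv (deriv ψ) t < 0) ∧
    StrictConcaveOn ℝ (Set.Ioo 0 L) ψ :=
  stmt2_general k L y hk hLk hy αy ψ hα hψ
end

section
/- Let L > 0 and let μ be a real number with 0 < μ < 4π²/L². Let ψ : [0, L] → ℝ be twice differentiable with ψ''(x) = −μ·ψ(x) for all x ∈ [0, L], suppose ψ(0) = ψ(L), and suppose ψ is not identically zero on [0, L]. Then L/2 is the unique zero of ψ' in the open interval (0, L). -/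
open Real

/-- if `0 < μ < 4π²/L²`, `ψ'' = -μ ψ` on `[0, L]`, `ψ(0) = ψ(L)`, and `ψ` is
not identically zero on `[0, L]`, then `L/2` is the unique zero of `ψ'` in `(0, L)`. -/
theorem stmt10 (L μ : ℝ) (hL : 0 < L) (hμ : 0 < μ) (hμ' : μ < 4 * π ^ 2 / L ^ 2)
    (ψ : ℝ → ℝ)
    (hd1 : ∀ x ∈ Set.Icc 0 L, DifferentiableAt ℝ ψ x)
    (hd2 : ∀ x ∈ Set.Icc 0 L, DifferentiableAt ℝ (deriv ψ) x)
    (hode : ∀ x ∈ Set.Icc 0 L, deriv (deriv ψ) x = -μ * ψ x)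
    (hends : ψ 0 = ψ L)
    (hne : ¬ ∀ x ∈ Set.Icc 0 L, ψ x = 0) :
    ∀ x ∈ Set.Ioo 0 L, (deriv ψ x = 0 ↔ x = L / 2) := by
  set ω := Real.sqrt μ with hωdef
  have hω : 0 < ω := Real.sqrt_pos.mpr hμ
  have hω2 : ω ^ 2 = μ := Real.sq_sqrt hμ.le
  have hωL : ω * L / 2 < π := by
    have h2 : ω < 2 * π / L := by
      rw [hωdef, show (2 * π / L) = Real.sqrt ((2 * π / L) ^ 2) from
        (Real.sqrt_sq (by positivity)).symm]
      apply Real.sqrt_lt_sqrt hμ.le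
      have : (2 * π / L) ^ 2 = 4 * π ^ 2 / L ^ 2 := by ring
      linarith [hμ']
    have := (lt_div_iff₀ hL).mp h2
    linarith
  -- trig shorthands
  set a := L / 2 with ha
  set c : ℝ → ℝ := fun x => Real.cos (ω * (x - a)) with hc
  set s : ℝ → ℝ := fun x => Real.sin (ω * (x - a)) with hs
  have hlin : ∀ x : ℝ, HasDerivAt (fun x => ω * (x - a)) ω x := fun x => by
    simpa using ((hasDerivAt_id x).sub_const a).const_mul ω
  have hcd : ∀ x : ℝ, HasDerivAt c (-(ω * s x)) x := fun x => by
    simpa [hc, hs, mul_comm] using (hlin x).cos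
  have hsd : ∀ x : ℝ, HasDerivAt s (ω * c x) x := fun x => by
    simpa [hc, hs, mul_comm] using (hlin x).sin
  -- Wronskian-type constants
  set Wc : ℝ → ℝ := fun x => deriv ψ x * c x + ψ x * (ω * s x) with hWc
  set Ws : ℝ → ℝ := fun x => deriv ψ x * s x - ψ x * (ω * c x) with hWs
  have hWcd : ∀ x ∈ Set.Icc 0 L, HasDerivAt Wc 0 x := by
    intro x hx
    have hψ := (hd1 x hx).hasDerivAt
    have hψ' := (hd2 x hx).hasDerivAt
    have h1 : HasDerivAt Wc
        (deriv (deriv ψ) x * c x + deriv ψ x * (-(ω * s x)) +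
          (deriv ψ x * (ω * s x) + ψ x * (ω * (ω * c x)))) x :=
      (hψ'.mul (hcd x)).add (hψ.mul ((hsd x).const_mul ω))
    have := hode x hx
    convert h1 using 1
    rw [this]
    linear_combination (-(ψ x * c x)) * hω2
  have hWsd : ∀ x ∈ Set.Icc 0 L, HasDerivAt Ws 0 x := by
    intro x hx
    have hψ := (hd1 x hx).hasDerivAt
    have hψ' := (hd2 x hx).hasDerivAt
    have h1 : HasDerivAt Ws
        (deriv (deriv ψ) x * s x + deriv ψ x * (ω * c x) -
          (deriv ψ x * (ω * c x) + ψ x * (ω * (-(ω * s x))))) x :=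
      (hψ'.mul (hsd x)).sub (hψ.mul ((hcd x).const_mul ω))
    have := hode x hx
    convert h1 using 1
    rw [this]
    linear_combination (-(ψ x * s x)) * hω2
  have hconst : ∀ (F : ℝ → ℝ), (∀ x ∈ Set.Icc 0 L, HasDerivAt F 0 x) →
      ∀ x ∈ Set.Icc 0 L, F x = F 0 := by
    intro F hF
    apply constant_of_has_deriv_right_zero
    · intro x hx
      exact (hF x hx).continuousAt.continuousWithinAt
    · intro x hx
      exact ((hF x (Set.mem_Icc_of_Ico hx)).hasDerivWithinAt)
  have hWcconst := hconst Wc hWcd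
  have hWsconst := hconst Ws hWsd
  set Kc := Wc 0 with hKc
  set Ks := Ws 0 with hKs
  have hpyth : ∀ x : ℝ, s x ^ 2 + c x ^ 2 = 1 := fun x => Real.sin_sq_add_cos_sq _
  -- recover ψ and ψ'
  have hψeq : ∀ x ∈ Set.Icc 0 L, ψ x * ω = Kc * s x - Ks * c x := by
    intro x hx
    have h1 := hWcconst x hx
    have h2 := hWsconst x hx
    rw [hWc] at h1; rw [hWs] at h2
    have hp := hpyth x
    linear_combination s x * h1 - c x * h2 - ψ x * ω * hp
  have hψ'eq : ∀ x ∈ Set.Icc 0 L, deriv ψ x = Kc * c x + Ks * s x := by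
    intro x hx
    have h1 := hWcconst x hx
    have h2 := hWsconst x hx
    rw [hWc] at h1; rw [hWs] at h2
    have hp := hpyth x
    linear_combination c x * h1 + s x * h2 - deriv ψ x * hp
  -- boundary values of c, s
  have hs0 : s 0 = -Real.sin (ω * L / 2) := by
    simp only [hs, ha]
    rw [show ω * (0 - L / 2) = -(ω * L / 2) by ring, Real.sin_neg]
  have hsL : s L = Real.sin (ω * L / 2) := by
    simp only [hs, ha]
    rw [show ω * (L - L / 2) = ω * L / 2 by ring]
  have hc0L : c 0 = c L := by
    simp only [hc, ha]
    rw [show ω * (0 - L / 2) = -(ω * L / 2) by ring, Real.cos_neg,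
      show ω * (L - L / 2) = ω * L / 2 by ring]
  have hsinpos : 0 < Real.sin (ω * L / 2) := by
    apply Real.sin_pos_of_pos_of_lt_pi (by positivity) hωL
  -- Kc = 0
  have hKc0 : Kc = 0 := by
    have h0 := hψeq 0 (Set.left_mem_Icc.mpr hL.le)
    have hLe := hψeq L (Set.right_mem_Icc.mpr hL.le)
    rw [hends] at h0
    rw [hs0] at h0; rw [hsL] at hLe; rw [hc0L] at h0
    have h3 : Kc * Real.sin (ω * L / 2) = 0 := by linarith
    exact (mul_eq_zero.mp h3).resolve_right hsinpos.ne' 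
  -- Ks ≠ 0
  have hKs0 : Ks ≠ 0 := by
    intro h
    apply hne
    intro x hx
    have := hψeq x hx
    rw [hKc0, h] at this
    have : ψ x * ω = 0 := by linarith
    exact (mul_eq_zero.mp this).resolve_right hω.ne'
  -- conclusion
  intro x hx
  have hxI : x ∈ Set.Icc 0 L := Set.mem_Icc_of_Ioo hx
  have hderiv : deriv ψ x = Ks * s x := by
    rw [hψ'eq x hxI, hKc0]; ring
  rw [hderiv]
  constructor
  · intro h
    have hsx : s x = 0 := by
      rcases mul_eq_zero.mp h with h | h
      · exact absurd h hKs0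
      · exact h
    rw [hs] at hsx
    have hb1 : -π < ω * (x - a) := by
      have : -(ω * L / 2) < ω * (x - a) := by
        rw [ha]; nlinarith [hx.1, hx.2, hω]
      linarith
    have hb2 : ω * (x - a) < π := by
      have : ω * (x - a) < ω * L / 2 := by
        rw [ha]; nlinarith [hx.1, hx.2, hω]
      linarith
    have := (Real.sin_eq_zero_iff_of_lt_of_lt hb1 hb2).mp hsx
    have hx0 : x - a = 0 := by
      rcases mul_eq_zero.mp this with h | h
      · exact absurd h hω.ne'
      · exact h
    rw [ha] at hx0; linarith
  · intro h
    rw [hs, h, ha]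
    simp
end
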